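/- Let H be an r-uniform hypergraph (r ≥ 2) on n vertices, let k ≥ 1, and let Ĥ(k) be obtained from H by attaching at each vertex i exactly k pendant hyperedges, each consisting of i together with r−1 new vertices (all added vertices distinct). If (λ, x) is an eigenpair of the adjacency hypermatrix A(H) and μ ∈ ℂ satisfies μ^r − λ μ^{r−1} − k = 0, then μ is an eigenvalue of A(Ĥ(k)); an eigenvector is given by assigning x_i to each original vertex i and x_i/μ to every new vertex of every pendant hyperedge attached at i. -/

import Mathlib

open Finset
open scoped Classical

/-- The adjacency hypermatrix entry of an `r`-uniform hypergraph with hyperedge set `E`: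
the `(j, f 0, …, f (r-2))`-entry is `1/(r-1)!` when the indices are pairwise distinct and
form a hyperedge, and `0` otherwise. -/
noncomputable def adjEntry (r : ℕ) {V : Type*} [Fintype V] [DecidableEq V]
    (E : Finset (Finset V)) (j : V) (f : Fin (r - 1) → V) : ℂ :=
  if Function.Injective f ∧ (∀ i, f i ≠ j) ∧ insert j (Finset.image f Finset.univ) ∈ E then
    1 / ((r - 1).factorial : ℂ)
  else 0

/-- The degree of a vertex: the number of hyperedges containing it. -/
def hdegree {V : Type*} [DecidableEq V] (E : Finset (Finset V)) (v : V) : ℕ :=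
  (E.filter fun e => v ∈ e).card

/-- The Laplacian hypermatrix entry `L = D - A`. -/
noncomputable def lapEntry (r : ℕ) {V : Type*} [Fintype V] [DecidableEq V]
    (E : Finset (Finset V)) (j : V) (f : Fin (r - 1) → V) : ℂ :=
  (if ∀ i, f i = j then (hdegree E j : ℂ) else 0) - adjEntry r E j f

/-- The signless Laplacian hypermatrix entry `Q = D + A`. -/
noncomputable def signlessEntry (r : ℕ) {V : Type*} [Fintype V] [DecidableEq V]
    (E : Finset (Finset V)) (j : V) (f : Fin (r - 1) → V) : ℂ :=
  (if ∀ i, f i = j then (hdegree E j : ℂ) else 0) + adjEntry r E j f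

/-- `(lam, x)` is an eigenpair of the order-`r` hypermatrix `T` (represented by its
first index and the remaining `r-1` indices). -/
def IsEigenpair {V : Type*} [Fintype V] (r : ℕ)
    (T : V → (Fin (r - 1) → V) → ℂ) (lam : ℂ) (x : V → ℂ) : Prop :=
  x ≠ 0 ∧ ∀ j, ∑ f : Fin (r - 1) → V, T j f * ∏ i, x (f i) = lam * x j ^ (r - 1)

/-- A vector is non-main if the sum over all `(r-1)`-subsets `S` of the vertex set of
`∏_{i ∈ S} x i` vanishes. -/
def IsNonMainVec {V : Type*} [Fintype V] [DecidableEq V] (r : ℕ) (x : V → ℂ) : Prop :=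
  ∑ S ∈ Finset.univ.powersetCard (r - 1), ∏ i ∈ S, x i = 0

/-- An eigenvalue is non-main if it has some non-main eigenvector. -/
def IsNonMainEigenvalue {V : Type*} [Fintype V] [DecidableEq V] (r : ℕ)
    (T : V → (Fin (r - 1) → V) → ℂ) (lam : ℂ) : Prop :=
  ∃ x, IsEigenpair r T lam x ∧ IsNonMainVec r x

/-- The hypergraph `Ĥ(k)` obtained from `H` (on `Fin n`) by attaching at each vertex `i`
exactly `k` pendant hyperedges; the `c`-th pendant hyperedge at `i` consists of `i`
together with the `r - 1` new vertices `(i, c, j)`. -/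
def pendantEdges (r n k : ℕ) (E : Finset (Finset (Fin n))) :
    Finset (Finset (Fin n ⊕ Fin n × Fin k × Fin (r - 1))) :=
  E.image (fun e => e.map ⟨Sum.inl, Sum.inl_injective⟩) ∪
  Finset.univ.image (fun p : Fin n × Fin k =>
    insert (Sum.inl p.1) (Finset.univ.image fun j : Fin (r - 1) => Sum.inr (p.1, p.2, j)))

lemma factorial_inj_card {V : Type*} [Fintype V] [DecidableEq V] (m : ℕ) (s : Finset V)
    (hs : s.card = m) :
    (Finset.univ.filter fun f : Fin m → V =>
      Function.Injective f ∧ Finset.image f Finset.univ = s).card = m.factorial := by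
  classical
  have e : {f : Fin m → V // Function.Injective f ∧ Finset.image f Finset.univ = s} ≃
      (Fin m ↪ s) :=
  { toFun := fun f => ⟨fun i => ⟨f.1 i, by
      have h : f.1 i ∈ Finset.image f.1 Finset.univ :=
        Finset.mem_image_of_mem _ (Finset.mem_univ i)
      rwa [f.2.2] at h⟩, fun i i' h => f.2.1 (by
        simpa [Subtype.ext_iff] using h)⟩
    invFun := fun g => ⟨fun i => (g i : V), by
      refine ⟨fun i i' h => g.injective (Subtype.ext h), ?_⟩
      apply Finset.eq_of_subset_of_card_le
      · intro w hw
        simp only [Finset.mem_image] at hw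
        obtain ⟨i, _, rfl⟩ := hw
        exact (g i).2
      · rw [hs, Finset.card_image_of_injective _ (fun i i' h => g.injective (Subtype.ext h)),
          Finset.card_univ, Fintype.card_fin]⟩
    left_inv := fun f => rfl
    right_inv := fun g => rfl }
  rw [← Fintype.card_subtype, Fintype.card_congr e, Fintype.card_embedding_eq,
    Fintype.card_coe, hs, Fintype.card_fin, Nat.descFactorial_self]

lemma adj_sum {V : Type*} [Fintype V] [DecidableEq V] (r : ℕ)
    (E : Finset (Finset V)) (hu : ∀ e ∈ E, e.card = r) (j : V) (y : V → ℂ) :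
    ∑ f : Fin (r - 1) → V, adjEntry r E j f * ∏ i, y (f i)
      = ∑ e ∈ E.filter (fun e => j ∈ e), ∏ w ∈ e.erase j, y w := by
  classical
  have hfac : ((r - 1).factorial : ℂ) ≠ 0 := Nat.cast_ne_zero.2 (Nat.factorial_ne_zero _)
  have step1 : ∑ f : Fin (r - 1) → V, adjEntry r E j f * ∏ i, y (f i)
      = ∑ f ∈ Finset.univ.filter (fun f : Fin (r-1) → V =>
          Function.Injective f ∧ (∀ i, f i ≠ j) ∧ insert j (Finset.image f Finset.univ) ∈ E),
          (1 / ((r - 1).factorial : ℂ)) * ∏ i, y (f i) := by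
    rw [Finset.sum_filter]
    refine Finset.sum_congr rfl fun f _ => ?_
    unfold adjEntry
    split_ifs <;> simp
  have hmaps : ∀ f ∈ Finset.univ.filter (fun f : Fin (r-1) → V =>
      Function.Injective f ∧ (∀ i, f i ≠ j) ∧ insert j (Finset.image f Finset.univ) ∈ E),
      insert j (Finset.image f Finset.univ) ∈ E.filter (fun e => j ∈ e) := by
    intro f hf
    obtain ⟨-, -, -, h⟩ := Finset.mem_filter.1 hf
    · exact Finset.mem_filter.2 ⟨h, Finset.mem_insert_self _ _⟩
  rw [step1, ← Finset.sum_fiberwise_of_maps_to hmaps]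
  refine Finset.sum_congr rfl fun e he => ?_
  have heE : e ∈ E := (Finset.mem_filter.1 he).1
  have hje : j ∈ e := (Finset.mem_filter.1 he).2
  have hcard : (e.erase j).card = r - 1 := by
    rw [Finset.card_erase_of_mem hje, hu e heE]
  have hset : (Finset.univ.filter (fun f : Fin (r-1) → V =>
          Function.Injective f ∧ (∀ i, f i ≠ j) ∧ insert j (Finset.image f Finset.univ) ∈ E)).filter
        (fun f => insert j (Finset.image f Finset.univ) = e)
      = Finset.univ.filter (fun f : Fin (r-1) → V =>
          Function.Injective f ∧ Finset.image f Finset.univ = e.erase j) := by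
    ext f
    simp only [Finset.mem_filter, Finset.mem_univ, true_and]
    constructor
    · rintro ⟨⟨hinj, hne, -⟩, heq⟩
      refine ⟨hinj, ?_⟩
      have hj : j ∉ Finset.image f Finset.univ := by
        simp only [Finset.mem_image]
        rintro ⟨i, -, hi⟩
        exact hne i hi
      rw [← heq, Finset.erase_insert hj]
    · rintro ⟨hinj, him⟩
      have hne : ∀ i, f i ≠ j := by
        intro i hi
        have hmem : f i ∈ e.erase j := him ▸ Finset.mem_image_of_mem _ (Finset.mem_univ i)
        rw [hi] at hmem
        exact (Finset.mem_erase.1 hmem).1 rfl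
      have heq : insert j (Finset.image f Finset.univ) = e := by
        rw [him, Finset.insert_erase hje]
      exact ⟨⟨hinj, hne, heq ▸ heE⟩, heq⟩
  rw [hset]
  have hconst : ∀ f ∈ Finset.univ.filter (fun f : Fin (r-1) → V =>
      Function.Injective f ∧ Finset.image f Finset.univ = e.erase j),
      (1 / ((r-1).factorial : ℂ)) * ∏ i, y (f i)
        = (1 / ((r-1).factorial : ℂ)) * ∏ w ∈ e.erase j, y w := by
    intro f hf
    obtain ⟨-, hinj, him⟩ := Finset.mem_filter.1 hf
    congr 1
    rw [← him, Finset.prod_image (fun a _ b _ h => hinj h)]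
  rw [Finset.sum_congr rfl hconst, Finset.sum_const, factorial_inj_card _ _ hcard,
    nsmul_eq_mul, ← mul_assoc, mul_one_div, div_self hfac, one_mul]

def pend (r n k : ℕ) (p : Fin n × Fin k) : Finset (Fin n ⊕ Fin n × Fin k × Fin (r - 1)) :=
  insert (Sum.inl p.1) (Finset.univ.image fun j : Fin (r - 1) => Sum.inr (p.1, p.2, j))

lemma pendantEdges_eq (r n k : ℕ) (E : Finset (Finset (Fin n))) :
    pendantEdges r n k E =
      E.image (fun e => e.map ⟨Sum.inl, Sum.inl_injective⟩) ∪
      Finset.univ.image (pend r n k) := rfl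

/-- adjacency eigenvalues of `Ĥ(k)`. -/
theorem stmt13 (r n k : ℕ) (hr : 2 ≤ r) (hk : 1 ≤ k)
    (E : Finset (Finset (Fin n))) (hu : ∀ e ∈ E, e.card = r)
    (lam mu : ℂ) (x : Fin n → ℂ)
    (hx : IsEigenpair r (adjEntry r E) lam x)
    (hmu : mu ^ r - lam * mu ^ (r - 1) - k = 0) :
    IsEigenpair r (adjEntry r (pendantEdges r n k E)) mu
      (Sum.elim x fun p => x p.1 / mu) := by
  classical
  obtain ⟨hx0, hxe⟩ := hx
  have hk0 : (k : ℂ) ≠ 0 := Nat.cast_ne_zero.2 (by omega)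
  have hmu0 : mu ≠ 0 := by
    intro h
    rw [h, zero_pow (by omega : r ≠ 0), zero_pow (by omega : r - 1 ≠ 0), mul_zero] at hmu
    exact hk0 (by linear_combination -hmu)
  have hj0 : 0 < r - 1 := by omega
  set j0 : Fin (r - 1) := ⟨0, hj0⟩ with hj0def
  set emb : Fin n ↪ (Fin n ⊕ Fin n × Fin k × Fin (r - 1)) := ⟨Sum.inl, Sum.inl_injective⟩
    with hemb
  -- injectivity facts
  have hginj : ∀ p : Fin n × Fin k, Function.Injective
      (fun j : Fin (r-1) => (Sum.inr (p.1, p.2, j) : Fin n ⊕ Fin n × Fin k × Fin (r-1))) := by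
    intro p a b h
    simpa using h
  have hpend_inj : Function.Injective (pend r n k) := by
    intro p q h
    have hm : (Sum.inr (p.1, p.2, j0) : Fin n ⊕ Fin n × Fin k × Fin (r-1)) ∈ pend r n k q := by
      rw [← h]
      exact Finset.mem_insert_of_mem (Finset.mem_image_of_mem _ (Finset.mem_univ j0))
    rcases Finset.mem_insert.1 hm with h' | h'
    · exact absurd h' (by simp)
    · obtain ⟨j', -, hj'⟩ := Finset.mem_image.1 h'
      obtain ⟨h1, h2, -⟩ : q.1 = p.1 ∧ q.2 = p.2 ∧ j' = j0 := by simpa using hj'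
      exact Prod.ext h1.symm h2.symm
  have hu' : ∀ e ∈ pendantEdges r n k E, e.card = r := by
    intro e he
    rw [pendantEdges_eq, Finset.mem_union] at he
    rcases he with he | he
    · obtain ⟨e₀, he₀, rfl⟩ := Finset.mem_image.1 he
      rw [Finset.card_map]; exact hu e₀ he₀
    · obtain ⟨p, -, rfl⟩ := Finset.mem_image.1 he
      rw [pend, Finset.card_insert_of_notMem (by simp),
        Finset.card_image_of_injective _ (hginj p), Finset.card_univ, Fintype.card_fin]
      omega
  refine ⟨?_, ?_⟩
  · intro h
    apply hx0
    funext v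
    have := congrFun h (Sum.inl v)
    simpa using this
  intro j
  rw [adj_sum r _ hu']
  have hdisj : Disjoint (E.image (fun e => e.map emb))
      ((Finset.univ : Finset (Fin n × Fin k)).image (pend r n k)) := by
    rw [Finset.disjoint_left]
    intro e hA hB
    obtain ⟨e₀, -, rfl⟩ := Finset.mem_image.1 hA
    obtain ⟨p, -, hp⟩ := Finset.mem_image.1 hB
    have hm : (Sum.inr (p.1, p.2, j0) : Fin n ⊕ Fin n × Fin k × Fin (r-1)) ∈ e₀.map emb := by
      rw [← hp]
      exact Finset.mem_insert_of_mem (Finset.mem_image_of_mem _ (Finset.mem_univ j0))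
    obtain ⟨a, -, ha⟩ := Finset.mem_map.1 hm
    exact absurd ha (by simp [hemb])
  rcases j with v | ⟨v, c, jj⟩
  · -- original vertex
    rw [pendantEdges_eq, Finset.filter_union, ← hemb, Finset.sum_union (Finset.disjoint_filter_filter hdisj)]
    have hA : (E.image (fun e => e.map emb)).filter (fun e => Sum.inl v ∈ e)
        = (E.filter (fun e => v ∈ e)).image (fun e => e.map emb) := by
      ext e'
      simp only [Finset.mem_filter, Finset.mem_image]
      constructor
      · rintro ⟨⟨e₀, he₀, rfl⟩, hv⟩
        refine ⟨e₀, ⟨he₀, ?_⟩, rfl⟩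
        obtain ⟨a, ha, ha'⟩ := Finset.mem_map.1 hv
        have : a = v := Sum.inl_injective ha'
        rwa [this] at ha
      · rintro ⟨e₀, ⟨he₀, hv⟩, rfl⟩
        exact ⟨⟨e₀, he₀, rfl⟩, Finset.mem_map_of_mem _ hv⟩
    have hB : (Finset.univ.image (pend r n k)).filter (fun e => Sum.inl v ∈ e)
        = (Finset.univ.filter (fun p : Fin n × Fin k => p.1 = v)).image (pend r n k) := by
      ext e'
      simp only [Finset.mem_filter, Finset.mem_image, Finset.mem_univ, true_and]
      constructor
      · rintro ⟨⟨p, rfl⟩, hv⟩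
        refine ⟨p, ?_, rfl⟩
        rcases Finset.mem_insert.1 hv with h' | h'
        · exact (Sum.inl_injective h').symm
        · exact absurd h' (by simp)
      · rintro ⟨p, hp, rfl⟩
        exact ⟨⟨p, rfl⟩, by rw [pend, ← hp]; exact Finset.mem_insert_self _ _⟩
    have hAsum : ∑ e ∈ (E.image (fun e => e.map emb)).filter (fun e => Sum.inl v ∈ e),
        ∏ w ∈ e.erase (Sum.inl v), (Sum.elim x fun p => x p.1 / mu) w
        = lam * x v ^ (r - 1) := by
      rw [hA, Finset.sum_image (fun a _ b _ h => Finset.map_injective emb h)]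
      have hterm : ∀ e ∈ E.filter (fun e => v ∈ e),
          ∏ w ∈ (e.map emb).erase (Sum.inl v), (Sum.elim x fun p => x p.1 / mu) w
          = ∏ w ∈ e.erase v, x w := by
        intro e he
        have h1 : (e.map emb).erase (Sum.inl v) = (e.erase v).map emb :=
          (Finset.map_erase emb e v).symm
        rw [h1, Finset.prod_map]
        rfl
      rw [Finset.sum_congr rfl hterm, ← adj_sum r E hu v x]
      exact hxe v
    have hBsum : ∑ e ∈ (Finset.univ.image (pend r n k)).filter (fun e => Sum.inl v ∈ e),
        ∏ w ∈ e.erase (Sum.inl v), (Sum.elim x fun p => x p.1 / mu) w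
        = (k : ℂ) * (x v / mu) ^ (r - 1) := by
      rw [hB, Finset.sum_image (fun a _ b _ h => hpend_inj h)]
      have hterm : ∀ p ∈ Finset.univ.filter (fun p : Fin n × Fin k => p.1 = v),
          ∏ w ∈ (pend r n k p).erase (Sum.inl v),
            (Sum.elim x fun p => x p.1 / mu) w = (x v / mu) ^ (r - 1) := by
        rintro ⟨a, cc⟩ hp
        have hpv : a = v := (Finset.mem_filter.1 hp).2
        subst hpv
        rw [pend, Finset.erase_insert (by simp),
          Finset.prod_image (fun x1 _ x2 _ h => hginj (a, cc) h)]
        simp only [Sum.elim_inr]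
        rw [Finset.prod_const, Finset.card_univ, Fintype.card_fin]
      rw [Finset.sum_congr rfl hterm, Finset.sum_const, nsmul_eq_mul]
      congr 1
      have : Finset.univ.filter (fun p : Fin n × Fin k => p.1 = v) = {v} ×ˢ Finset.univ := by
        ext ⟨a, b⟩
        simp [Finset.mem_product, eq_comm]
      rw [this, Finset.card_product, Finset.card_singleton, Finset.card_univ,
        Fintype.card_fin, one_mul]
    rw [hAsum, hBsum]
    have hm : mu ^ r = mu * mu ^ (r - 1) := by
      conv_lhs => rw [show r = (r - 1) + 1 by omega]
      ring
    have hkey : (k : ℂ) = mu * mu ^ (r - 1) - lam * mu ^ (r - 1) := by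
      linear_combination hm - hmu
    have hpow : mu ^ (r - 1) ≠ 0 := pow_ne_zero _ hmu0
    simp only [Sum.elim_inl]
    rw [div_pow, hkey]
    field_simp
    ring
  · -- pendant vertex
    rw [pendantEdges_eq, Finset.filter_union, ← hemb, Finset.sum_union (Finset.disjoint_filter_filter hdisj)]
    have hA : (E.image (fun e => e.map emb)).filter
        (fun e => (Sum.inr (v, c, jj) : Fin n ⊕ Fin n × Fin k × Fin (r-1)) ∈ e) = ∅ := by
      rw [Finset.filter_eq_empty_iff]
      intro e he
      obtain ⟨e₀, -, rfl⟩ := Finset.mem_image.1 he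
      intro hmem
      obtain ⟨a, -, ha⟩ := Finset.mem_map.1 hmem
      exact absurd ha (by simp [hemb])
    have hB : (Finset.univ.image (pend r n k)).filter
        (fun e => (Sum.inr (v, c, jj) : Fin n ⊕ Fin n × Fin k × Fin (r-1)) ∈ e)
        = {pend r n k (v, c)} := by
      ext e'
      simp only [Finset.mem_filter, Finset.mem_image, Finset.mem_univ, true_and,
        Finset.mem_singleton]
      constructor
      · rintro ⟨⟨p, rfl⟩, h⟩
        rcases Finset.mem_insert.1 h with h' | h'
        · exact absurd h' (by simp)
        · obtain ⟨j', -, hj'⟩ := Finset.mem_image.1 h'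
          obtain ⟨h1, h2, -⟩ : p.1 = v ∧ p.2 = c ∧ j' = jj := by simpa using hj'
          rw [show p = (v, c) from Prod.ext h1 h2]
      · rintro rfl
        exact ⟨⟨(v, c), rfl⟩,
          Finset.mem_insert_of_mem (Finset.mem_image_of_mem _ (Finset.mem_univ jj))⟩
    rw [hA, hB, Finset.sum_empty, Finset.sum_singleton, zero_add]
    have herase : (pend r n k (v, c)).erase (Sum.inr (v, c, jj))
        = insert (Sum.inl v) (((Finset.univ.erase jj).image
            (fun j : Fin (r-1) => (Sum.inr (v, c, j) : Fin n ⊕ Fin n × Fin k × Fin (r-1))))) := by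
      rw [pend, Finset.erase_insert_of_ne (by simp),
        ← Finset.image_erase (fun a b h => by simpa using h : Function.Injective
          (fun j : Fin (r-1) => (Sum.inr (v, c, j) : Fin n ⊕ Fin n × Fin k × Fin (r-1))))]
    rw [herase, Finset.prod_insert (by simp),
      Finset.prod_image (fun a _ b _ h => by simpa using h)]
    simp only [Sum.elim_inl, Sum.elim_inr]
    rw [Finset.prod_const, Finset.card_erase_of_mem (Finset.mem_univ jj),
      Finset.card_univ, Fintype.card_fin]
    have hstep : r - 1 = (r - 1 - 1) + 1 := by omega
    rw [show (x v / mu) ^ (r - 1) = (x v / mu) ^ (r - 1 - 1) * (x v / mu) by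
      rw [← pow_succ, ← hstep], div_pow]
    field_simp
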